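/- arXiv:2012.10847 — 2 statements merged into one kernel-verified Lean document; each statement's English description precedes it below -/
import Mathlib

section
/- Let 0 < p < q < 1, let A, D > 0, x > 0, and let λ, a, d ∈ ℝ^n (with n ≥ 1). Define F(π) = α A x^p + δ D x^q + ⟨π, p A x^p (λ + a) + q D x^q (λ + d)⟩ + (1/2)‖π‖² ((p² - p) A x^p + (q² - q) D x^q) for π ∈ ℝ^n, where α = -(p/(2(1-p)))‖λ + a‖² and δ = -(q/(2(1-q)))‖λ + d‖². Then F is strictly concave, its maximizer is π* = (p A x^p (λ + a) + q D x^q (λ + d)) / (p(1-p) A x^p + q(1-q) D x^q), and the maximum value equals -(p q (1-p)(1-q) A D x^{p+q}) / (2(p(1-p) A x^p + q(1-q) D x^q)) · ‖(λ + a)/(1-p) - (λ + d)/(1-q)‖². In particular the maximum value is ≤ 0, with equality if and only if (λ + a)/(1-p) = (λ + d)/(1-q). -/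
/-!
With `s = p A x^p`, `t = q D x^q` and `K = (1-p) s + (1-q) t > 0`, the drift is the concave quadratic
`F π = c + ⟪π, v⟫ - (K/2) ‖π‖²` with `v = s (λ + a) + t (λ + d)`. Completing the square gives
`F π = F (v / K) - (K/2) ‖π - v / K‖²`, so `v / K` is the unique maximiser with value
`c + ‖v‖² / (2K)`. By the weighted variance identity
`‖σ U + τ W‖² / (σ + τ) - σ ‖U‖² - τ ‖W‖² = -(σ τ / (σ + τ)) ‖U - W‖²`
(applied to `U = (λ + a)/(1-p)`, `W = (λ + d)/(1-q)`, `σ = (1-p) s`, `τ = (1-q) t`)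
this value is a negative multiple of `‖U - W‖²`.
-/

open RealInnerProductSpace Set

section Quadratic

variable {E : Type*} [NormedAddCommGroup E] [InnerProductSpace ℝ E]

theorem norm_smul_add_smul_sq_of_add_eq_one (x y : E) {t s : ℝ} (hts : t + s = 1) :
    ‖t • x + s • y‖ ^ 2 = t * ‖x‖ ^ 2 + s * ‖y‖ ^ 2 - t * s * ‖x - y‖ ^ 2 := by
  rw [norm_add_sq_real, norm_sub_sq_real, norm_smul, norm_smul, real_inner_smul_left,
    real_inner_smul_right, Real.norm_eq_abs, Real.norm_eq_abs, mul_pow, mul_pow, sq_abs, sq_abs]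
  obtain rfl : s = 1 - t := by linarith
  ring

theorem strictConcaveOn_const_add_inner_sub_norm_sq {K : ℝ} (hK : 0 < K) (c : ℝ) (v : E) :
    StrictConcaveOn ℝ univ (fun π : E => c + ⟪π, v⟫ - K / 2 * ‖π‖ ^ 2) := by
  refine ⟨convex_univ, fun π₁ _ π₂ _ hne t s ht hs hts => ?_⟩
  have hgap : 0 < K / 2 * (t * s * ‖π₁ - π₂‖ ^ 2) := by
    have : 0 < ‖π₁ - π₂‖ := norm_pos_iff.mpr (sub_ne_zero.mpr hne)
    positivity
  have hc : c = t * c + s * c := by rw [← add_mul, hts, one_mul]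
  simp only [smul_eq_mul, inner_add_left, real_inner_smul_left,
    norm_smul_add_smul_sq_of_add_eq_one π₁ π₂ hts]
  linarith

theorem const_add_inner_sub_norm_sq_eq {K : ℝ} (hK : K ≠ 0) (c : ℝ) (v π : E) :
    c + ⟪π, v⟫ - K / 2 * ‖π‖ ^ 2 = c + ‖v‖ ^ 2 / (2 * K) - K / 2 * ‖π - K⁻¹ • v‖ ^ 2 := by
  rw [norm_sub_sq_real, norm_smul, real_inner_smul_right, Real.norm_eq_abs, mul_pow, sq_abs]
  field_simp
  ring

theorem const_add_inner_sub_norm_sq_inv_smul {K : ℝ} (hK : K ≠ 0) (c : ℝ) (v : E) :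
    c + ⟪K⁻¹ • v, v⟫ - K / 2 * ‖K⁻¹ • v‖ ^ 2 = c + ‖v‖ ^ 2 / (2 * K) := by
  rw [const_add_inner_sub_norm_sq_eq hK, sub_self, norm_zero]
  ring

theorem const_add_inner_sub_norm_sq_le {K : ℝ} (hK : 0 < K) (c : ℝ) (v π : E) :
    c + ⟪π, v⟫ - K / 2 * ‖π‖ ^ 2 ≤ c + ‖v‖ ^ 2 / (2 * K) := by
  rw [const_add_inner_sub_norm_sq_eq hK.ne']
  have : 0 ≤ K / 2 * ‖π - K⁻¹ • v‖ ^ 2 := by positivity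
  linarith

theorem weighted_variance_identity {a b s t : ℝ} (ha : a ≠ 0) (hb : b ≠ 0) (hK : a * s + b * t ≠ 0)
    (u w : E) :
    -(s / (2 * a)) * ‖u‖ ^ 2 - t / (2 * b) * ‖w‖ ^ 2 + ‖s • u + t • w‖ ^ 2 / (2 * (a * s + b * t)) =
      -(s * t * a * b) / (2 * (a * s + b * t)) * ‖a⁻¹ • u - b⁻¹ • w‖ ^ 2 := by
  rw [norm_add_sq_real, norm_sub_sq_real]
  simp only [norm_smul, real_inner_smul_left, real_inner_smul_right, Real.norm_eq_abs, mul_pow,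
    sq_abs]
  generalize hK_def : a * s + b * t = K at hK ⊢
  field_simp
  subst hK_def
  ring

end Quadratic

theorem stmt2_general {n : ℕ} (p q A D x : ℝ)
    (hp : 0 < p) (hpq : p < q) (hq : q < 1) (hA : 0 < A) (hD : 0 < D) (hx : 0 < x)
    (lam a d : EuclideanSpace ℝ (Fin n)) :
    let α : ℝ := -(p / (2 * (1 - p))) * ‖lam + a‖ ^ 2
    let δ : ℝ := -(q / (2 * (1 - q))) * ‖lam + d‖ ^ 2
    let F : EuclideanSpace ℝ (Fin n) → ℝ := fun π =>
      α * A * x ^ p + δ * D * x ^ q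
        + (inner ℝ π ((p * A * x ^ p) • (lam + a) + (q * D * x ^ q) • (lam + d)) : ℝ)
        + (1 / 2) * ‖π‖ ^ 2 * ((p ^ 2 - p) * A * x ^ p + (q ^ 2 - q) * D * x ^ q)
    let πs : EuclideanSpace ℝ (Fin n) :=
      (p * (1 - p) * A * x ^ p + q * (1 - q) * D * x ^ q)⁻¹ •
        ((p * A * x ^ p) • (lam + a) + (q * D * x ^ q) • (lam + d))
    StrictConcaveOn ℝ Set.univ F ∧ (∀ π, F π ≤ F πs) ∧
      F πs = -(p * q * (1 - p) * (1 - q) * A * D * x ^ (p + q)) /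
          (2 * (p * (1 - p) * A * x ^ p + q * (1 - q) * D * x ^ q)) *
          ‖(1 - p)⁻¹ • (lam + a) - (1 - q)⁻¹ • (lam + d)‖ ^ 2 ∧
      F πs ≤ 0 ∧
      (F πs = 0 ↔ (1 - p)⁻¹ • (lam + a) = (1 - q)⁻¹ • (lam + d)) := by
  intro α δ F πs
  have h1p : 0 < 1 - p := by linarith
  have h1q : 0 < 1 - q := by linarith
  have hq0 : 0 < q := hp.trans hpq
  set s := p * A * x ^ p
  set t := q * D * x ^ q
  set v := s • (lam + a) + t • (lam + d)
  set c := -(s / (2 * (1 - p))) * ‖lam + a‖ ^ 2 - t / (2 * (1 - q)) * ‖lam + d‖ ^ 2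
  have hK_eq : p * (1 - p) * A * x ^ p + q * (1 - q) * D * x ^ q = (1 - p) * s + (1 - q) * t := by
    ring
  set K := (1 - p) * s + (1 - q) * t
  have hK : 0 < K := by positivity
  have hF : F = fun π => c + ⟪π, v⟫ - K / 2 * ‖π‖ ^ 2 := by
    funext π
    simp only [F, α, δ, c, K, s, t]
    ring
  have hπs : πs = K⁻¹ • v := by simp only [πs, hK_eq, v, s, t]
  have hvalue : F πs = c + ‖v‖ ^ 2 / (2 * K) := by
    rw [hF, hπs]
    exact const_add_inner_sub_norm_sq_inv_smul hK.ne' c v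
  have hformula : F πs = -(p * q * (1 - p) * (1 - q) * A * D * x ^ (p + q)) / (2 * K) *
      ‖(1 - p)⁻¹ • (lam + a) - (1 - q)⁻¹ • (lam + d)‖ ^ 2 := by
    rw [hvalue, weighted_variance_identity h1p.ne' h1q.ne' hK.ne', Real.rpow_add hx]
    ring
  have hcoeff : -(p * q * (1 - p) * (1 - q) * A * D * x ^ (p + q)) / (2 * K) < 0 := by
    have := Real.rpow_pos_of_pos hx (p + q)
    exact div_neg_of_neg_of_pos (neg_neg_iff_pos.mpr (by positivity)) (by positivity)
  rw [hK_eq]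
  refine ⟨hF ▸ strictConcaveOn_const_add_inner_sub_norm_sq hK c v,
    fun π => hvalue ▸ hF ▸ const_add_inner_sub_norm_sq_le hK c v π, hformula, ?_, ?_⟩
  · rw [hformula]
    exact mul_nonpos_of_nonpos_of_nonneg hcoeff.le (sq_nonneg _)
  · rw [hformula, mul_eq_zero, or_iff_right hcoeff.ne, sq_eq_zero_iff, norm_eq_zero, sub_eq_zero]

/-- Drift maximization for a two-power mixture forward performance process. -/
theorem stmt2 {n : ℕ} (hn : 1 ≤ n) (p q A D x : ℝ)
    (hp : 0 < p) (hpq : p < q) (hq : q < 1) (hA : 0 < A) (hD : 0 < D) (hx : 0 < x)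
    (lam a d : EuclideanSpace ℝ (Fin n)) :
    let α : ℝ := -(p / (2 * (1 - p))) * ‖lam + a‖ ^ 2
    let δ : ℝ := -(q / (2 * (1 - q))) * ‖lam + d‖ ^ 2
    let F : EuclideanSpace ℝ (Fin n) → ℝ := fun π =>
      α * A * x ^ p + δ * D * x ^ q
        + (inner ℝ π ((p * A * x ^ p) • (lam + a) + (q * D * x ^ q) • (lam + d)) : ℝ)
        + (1 / 2) * ‖π‖ ^ 2 * ((p ^ 2 - p) * A * x ^ p + (q ^ 2 - q) * D * x ^ q)
    let πs : EuclideanSpace ℝ (Fin n) :=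
      (p * (1 - p) * A * x ^ p + q * (1 - q) * D * x ^ q)⁻¹ •
        ((p * A * x ^ p) • (lam + a) + (q * D * x ^ q) • (lam + d))
    StrictConcaveOn ℝ Set.univ F ∧ (∀ π, F π ≤ F πs) ∧
      F πs = -(p * q * (1 - p) * (1 - q) * A * D * x ^ (p + q)) /
          (2 * (p * (1 - p) * A * x ^ p + q * (1 - q) * D * x ^ q)) *
          ‖(1 - p)⁻¹ • (lam + a) - (1 - q)⁻¹ • (lam + d)‖ ^ 2 ∧
      F πs ≤ 0 ∧
      (F πs = 0 ↔ (1 - p)⁻¹ • (lam + a) = (1 - q)⁻¹ • (lam + d)) :=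
  stmt2_general p q A D x hp hpq hq hA hD hx lam a d
end

section
/- Let 0 < p < q < 1 and let λ, a, d ∈ ℝ^n. Suppose that for A, D, x > 0 the identity p² ‖λ+a‖² A² x^{2p} + 2 p q ⟨λ+a, λ+d⟩ A D x^{p+q} + q² ‖λ+d‖² D² x^{2q} = -(2 p(1-p) α A² x^{2p} + 2(p(1-p) δ + q(1-q) α) A D x^{p+q} + 2 q(1-q) δ D² x^{2q}) holds for all x > 0, where α, δ ∈ ℝ. Then α = -(p/(2(1-p)))‖λ+a‖², δ = -(q/(2(1-q)))‖λ+d‖², and (λ+a)/(1-p) = (λ+d)/(1-q). -/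
/-- Since `2 ^ e₁ < 2 ^ e₂ < 2 ^ e₃`, evaluating at `x = 1, 2, 4` gives a nonsingular Vandermonde
system in the unknowns `c₁, c₂, c₃`. -/
theorem eq_zero_of_rpow_combination_eq_zero {e₁ e₂ e₃ : ℝ} (h₁₂ : e₁ < e₂) (h₂₃ : e₂ < e₃)
    {c₁ c₂ c₃ : ℝ} (h : ∀ x : ℝ, 0 < x → c₁ * x ^ e₁ + c₂ * x ^ e₂ + c₃ * x ^ e₃ = 0) :
    c₁ = 0 ∧ c₂ = 0 ∧ c₃ = 0 := by
  have at_one := h 1 one_pos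
  have at_two := h 2 two_pos
  have at_four := h 4 four_pos
  simp only [Real.one_rpow, mul_one] at at_one
  have four_rpow (e : ℝ) : (4 : ℝ) ^ e = ((2 : ℝ) ^ e) ^ 2 := by
    rw [show (4 : ℝ) = 2 * 2 by norm_num, Real.mul_rpow zero_le_two zero_le_two, sq]
  rw [four_rpow, four_rpow, four_rpow] at at_four
  set y₁ := (2 : ℝ) ^ e₁
  set y₂ := (2 : ℝ) ^ e₂
  set y₃ := (2 : ℝ) ^ e₃
  have hy₁₂ : y₁ < y₂ := Real.rpow_lt_rpow_of_exponent_lt one_lt_two h₁₂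
  have hy₂₃ : y₂ < y₃ := Real.rpow_lt_rpow_of_exponent_lt one_lt_two h₂₃
  have hc₃ : c₃ = 0 := by
    have : c₃ * ((y₃ - y₁) * (y₃ - y₂)) = 0 := by
      linear_combination at_four - (y₁ + y₂) * at_two + y₁ * y₂ * at_one
    exact (mul_eq_zero.mp this).resolve_right (by nlinarith)
  have hc₂ : c₂ = 0 := by
    have : c₂ * (y₂ - y₁) = 0 := by linear_combination at_two - y₁ * at_one - (y₃ - y₁) * hc₃
    exact (mul_eq_zero.mp this).resolve_right (by linarith)
  exact ⟨by linear_combination at_one - hc₂ - hc₃, hc₂, hc₃⟩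

theorem inv_smul_eq_inv_smul_of_norm_sq_add_norm_sq_eq_inner {E : Type*} [NormedAddCommGroup E]
    [InnerProductSpace ℝ E] {r s : ℝ} (hr : r ≠ 0) (hs : s ≠ 0) {u v : E}
    (h : s ^ 2 * ‖u‖ ^ 2 + r ^ 2 * ‖v‖ ^ 2 = 2 * r * s * inner ℝ u v) :
    r⁻¹ • u = s⁻¹ • v := by
  have hsq : ‖s • u - r • v‖ ^ 2 = 0 := by
    rw [norm_sub_sq_real, norm_smul, norm_smul, real_inner_smul_left, real_inner_smul_right,
      mul_pow, mul_pow, Real.norm_eq_abs, Real.norm_eq_abs, sq_abs, sq_abs]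
    linear_combination h
  have hsu : s • u = r • v :=
    sub_eq_zero.mp (norm_eq_zero.mp ((pow_eq_zero_iff two_ne_zero).mp hsq))
  rw [inv_smul_eq_iff₀ hr, smul_comm, eq_comm, inv_smul_eq_iff₀ hs, hsu]

/-- Coefficient matching for the two-power mixture zero-drift identity. -/
theorem stmt3 {n : ℕ} (p q : ℝ) (hp : 0 < p) (hpq : p < q) (hq : q < 1)
    (lam a d : EuclideanSpace ℝ (Fin n)) (A D : ℝ) (hA : 0 < A) (hD : 0 < D)
    (α δ : ℝ)
    (h : ∀ x : ℝ, 0 < x →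
      p ^ 2 * ‖lam + a‖ ^ 2 * A ^ 2 * x ^ (2 * p)
        + 2 * p * q * (inner ℝ (lam + a) (lam + d) : ℝ) * A * D * x ^ (p + q)
        + q ^ 2 * ‖lam + d‖ ^ 2 * D ^ 2 * x ^ (2 * q)
      = -(2 * p * (1 - p) * α * A ^ 2 * x ^ (2 * p)
          + 2 * (p * (1 - p) * δ + q * (1 - q) * α) * A * D * x ^ (p + q)
          + 2 * q * (1 - q) * δ * D ^ 2 * x ^ (2 * q))) :
    α = -(p / (2 * (1 - p))) * ‖lam + a‖ ^ 2 ∧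
    δ = -(q / (2 * (1 - q))) * ‖lam + d‖ ^ 2 ∧
    (1 - p)⁻¹ • (lam + a) = (1 - q)⁻¹ • (lam + d) := by
  have hq₀ : 0 < q := hp.trans hpq
  have hp₁ : 1 - p ≠ 0 := by linarith
  have hq₁ : 1 - q ≠ 0 := by linarith
  obtain ⟨h₁, h₂, h₃⟩ := eq_zero_of_rpow_combination_eq_zero (by linarith : 2 * p < p + q)
    (by linarith : p + q < 2 * q)
    (c₁ := (p ^ 2 * ‖lam + a‖ ^ 2 + 2 * p * (1 - p) * α) * A ^ 2)
    (c₂ := 2 * (p * q * inner ℝ (lam + a) (lam + d) + p * (1 - p) * δ + q * (1 - q) * α) * A * D)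
    (c₃ := (q ^ 2 * ‖lam + d‖ ^ 2 + 2 * q * (1 - q) * δ) * D ^ 2)
    fun x hx => by linear_combination h x hx
  have e₁ : p * ‖lam + a‖ ^ 2 + 2 * (1 - p) * α = 0 :=
    (mul_eq_zero.mp (by linear_combination h₁ : _ * (p * A ^ 2) = 0)).resolve_right (by positivity)
  have e₂ : p * q * inner ℝ (lam + a) (lam + d) + p * (1 - p) * δ + q * (1 - q) * α = 0 :=
    (mul_eq_zero.mp (by linear_combination h₂ / 2 : _ * (A * D) = 0)).resolve_right (by positivity)
  have e₃ : q * ‖lam + d‖ ^ 2 + 2 * (1 - q) * δ = 0 :=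
    (mul_eq_zero.mp (by linear_combination h₃ : _ * (q * D ^ 2) = 0)).resolve_right (by positivity)
  refine ⟨by field_simp; linear_combination e₁, by field_simp; linear_combination e₃, ?_⟩
  refine inv_smul_eq_inv_smul_of_norm_sq_add_norm_sq_eq_inner hp₁ hq₁ ?_
  -- substituting the values of `α` and `δ` into the cross-term coefficient
  have hcross : (p * q) * ((1 - q) ^ 2 * ‖lam + a‖ ^ 2 + (1 - p) ^ 2 * ‖lam + d‖ ^ 2
      - 2 * (1 - p) * (1 - q) * inner ℝ (lam + a) (lam + d)) = 0 := by
    linear_combination q * (1 - q) ^ 2 * e₁ + p * (1 - p) ^ 2 * e₃ - 2 * (1 - p) * (1 - q) * e₂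
  linear_combination (mul_eq_zero.mp hcross).resolve_left (by positivity)
end
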